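/- arXiv:2004.09229 — 2 statements merged into one kernel-verified Lean document; each statement's English description precedes it below -/
import Mathlib

section
/- Let L be a PG-lattice and M a faithful multiplication PG-lattice L-module. Then for every family {a_α | α ∈ Δ} of elements of L, ⋀_{α ∈ Δ}(a_α I_M) = (⋀_{α ∈ Δ} a_α) I_M. -/
open CompleteLattice

universe u v

/-- A multiplicative lattice: a complete lattice with a commutative, associative
multiplication distributing over arbitrary joins, whose top element is the
multiplicative identity. -/
class MultiplicativeLattice (L : Type u) extends CompleteLattice L, CommMonoid L where
  one_eq_top : (1 : L) = ⊤
  sSup_mul : ∀ (S : Set L) (b : L), sSup S * b = ⨆ a ∈ S, a * b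

/-- A lattice module over a multiplicative lattice. -/
class LatticeModule (L : Type u) [MultiplicativeLattice L] (M : Type v)
    extends CompleteLattice M, SMul L M where
  sSup_smul : ∀ (S : Set L) (A : M), (SupSet.sSup S : L) • A = ⨆ a ∈ S, a • A
  smul_sSup : ∀ (a : L) (S : Set M), a • sSup S = ⨆ B ∈ S, a • B
  mul_smul : ∀ (a b : L) (A : M), (a * b) • A = a • b • A
  one_smul : ∀ A : M, (1 : L) • A = A
  bot_smul : ∀ A : M, (⊥ : L) • A = (⊥ : M)

section LatticeDefs

variable {L : Type u} [MultiplicativeLattice L]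

/-- The residual `(a : b)` in `L`. -/
def lColon (a b : L) : L := sSup {x : L | x * b ≤ a}

/-- The radical `√a` of an element of `L`. -/
def radL (a : L) : L :=
  sSup {x : L | IsCompactElement x ∧ ∃ n : ℕ, 1 ≤ n ∧ x ^ n ≤ a}

/-- A principal element of a multiplicative lattice (meet principal and join principal). -/
def IsPrincipalElemL (e : L) : Prop :=
  (∀ a b : L, a ⊓ b * e = (lColon a e ⊓ b) * e) ∧
  (∀ a b : L, lColon (a * e ⊔ b) e = lColon b e ⊔ a)

/-- An expansion function on `L`. -/
def IsExpansionL (δ : L → L) : Prop :=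
  (∀ a : L, a ≤ δ a) ∧ ∀ a b : L, a ≤ b → δ a ≤ δ b

/-- A 2-absorbing element of `L`. -/
def Is2AbsorbingL (q : L) : Prop :=
  q < ⊤ ∧ ∀ a b c : L, a * b * c ≤ q → a * b ≤ q ∨ b * c ≤ q ∨ c * a ≤ q

/-- A 2-absorbing primary element of `L`. -/
def Is2AbsorbingPrimaryL (q : L) : Prop :=
  q < ⊤ ∧ ∀ a b c : L, a * b * c ≤ q → a * b ≤ q ∨ b * c ≤ radL q ∨ c * a ≤ radL q

/-- A `δL`-primary element of `L`. -/
def IsDeltaLPrimaryL (δL : L → L) (p : L) : Prop :=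
  p < ⊤ ∧ ∀ a b : L, a * b ≤ p → a ≤ p ∨ b ≤ δL p

end LatticeDefs

/-- `L` is a PG-lattice: every element is a join of principal elements. -/
def IsPGLattice (L : Type u) [MultiplicativeLattice L] : Prop :=
  ∀ a : L, a = sSup {e : L | IsPrincipalElemL e ∧ e ≤ a}

section ModuleDefs

variable (L : Type u) {M : Type v} [MultiplicativeLattice L] [LatticeModule L M]

/-- The element `(A : B)` of `L`, for `A B : M`. -/
def mColon (A B : M) : L := sSup {x : L | x • B ≤ A}

/-- The element `(N : a)` of `M`, for `N : M`, `a : L`. -/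
def resColon (N : M) (a : L) : M := sSup {X : M | a • X ≤ N}

/-- An expansion function on the `L`-module `M`. -/
def IsExpansionM (δ : M → M) : Prop :=
  (∀ A : M, A ≤ δ A) ∧ ∀ A B : M, A ≤ B → δ A ≤ δ B

/-- A `δ`-primary element of the `L`-module `M`. -/
def IsDeltaPrimaryM (δ : M → M) (P : M) : Prop :=
  P < ⊤ ∧ ∀ (a : L) (A : M), a • A ≤ P → A ≤ P ∨ a • (⊤ : M) ≤ δ P

/-- A prime element of the `L`-module `M`. -/
def IsPrimeM (P : M) : Prop :=
  P < ⊤ ∧ ∀ (a : L) (A : M), a • A ≤ P → A ≤ P ∨ a • (⊤ : M) ≤ P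

/-- A primary element of the `L`-module `M`. -/
def IsPrimaryM (P : M) : Prop :=
  P < ⊤ ∧ ∀ (a : L) (A : M), a • A ≤ P → A ≤ P ∨ ∃ n : ℕ, 1 ≤ n ∧ a ^ n • (⊤ : M) ≤ P

/-- A principal element of the `L`-module `M` (meet principal and join principal). -/
def IsPrincipalElemM (N : M) : Prop :=
  (∀ (b : L) (B : M), (b ⊓ mColon L B N) • N = b • N ⊓ B) ∧
  (∀ (b : L) (B : M), b ⊔ mColon L B N = mColon L (b • N ⊔ B) N)

/-- A maximal element of the `L`-module `M`. -/
def IsMaximalM (H : M) : Prop :=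
  H < ⊤ ∧ ∀ B : M, H ≤ B → B = H ∨ B = ⊤

/-- A meet prime element of the `L`-module `M`. -/
def IsMeetPrimeM (N : M) : Prop :=
  N < ⊤ ∧ ∀ A B : M, A ⊓ B ≤ N → A ≤ N ∨ B ≤ N

/-- The expansion function `δ₁` on a multiplication `L`-module `M`:
`δ₁(A) = (√(A : I_M)) I_M`. -/
def delta1 (A : M) : M := radL (mColon L A (⊤ : M)) • (⊤ : M)

/-- The expansion function `δ₂`: meet of all maximal elements above a proper element. -/
noncomputable def delta2 (A : M) : M := by
  classical exact if A = ⊤ then ⊤ else sInf {H : M | A ≤ H ∧ IsMaximalM L H}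

/-- A 2-absorbing primary element of the `L`-module `M`. -/
def Is2AbsorbingPrimaryM (Q : M) : Prop :=
  Q < ⊤ ∧ ∀ (a b : L) (N : M), (a * b) • N ≤ Q →
    a * b ≤ mColon L Q (⊤ : M) ∨
    b • N ≤ radL (mColon L Q (⊤ : M)) • (⊤ : M) ∨
    a • N ≤ radL (mColon L Q (⊤ : M)) • (⊤ : M)

/-- A `δL`-primary element of the `L`-module `M`, for an expansion function `δL` on `L`. -/
def IsDeltaLPrimaryM (δL : L → L) (P : M) : Prop :=
  P < ⊤ ∧ ∀ (a : L) (A : M), a • A ≤ P → A ≤ P ∨ a ≤ δL (mColon L P (⊤ : M))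

end ModuleDefs

/-- `M` is a PG-lattice `L`-module: every element is a join of principal elements. -/
def IsPGModule (L : Type u) (M : Type v) [MultiplicativeLattice L] [LatticeModule L M] : Prop :=
  ∀ N : M, N = sSup {E : M | IsPrincipalElemM L E ∧ E ≤ N}

/-- `M` is a multiplication `L`-module. -/
def IsMultiplicationModule (L : Type u) (M : Type v)
    [MultiplicativeLattice L] [LatticeModule L M] : Prop :=
  ∀ N : M, ∃ a : L, N = a • (⊤ : M)

/-- `M` is a faithful `L`-module: `(O_M : I_M) = 0`. -/
def IsFaithfulModule (L : Type u) (M : Type v)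
    [MultiplicativeLattice L] [LatticeModule L M] : Prop :=
  mColon L (⊥ : M) (⊤ : M) = (⊥ : L)

section Helpers

variable {L : Type u} {M : Type v} [MultiplicativeLattice L] [LatticeModule L M]

lemma ml_sup_mul (a b c : L) : (a ⊔ b) * c = a * c ⊔ b * c := by
  have h := MultiplicativeLattice.sSup_mul ({a, b} : Set L) c
  rwa [sSup_pair, iSup_pair] at h

lemma ml_mul_sup (a b c : L) : a * (b ⊔ c) = a * b ⊔ a * c := by
  rw [mul_comm, ml_sup_mul, mul_comm b a, mul_comm c a]

lemma ml_mul_le_right (a b : L) : a * b ≤ b := by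
  have h1 : a ⊔ (1 : L) = 1 := by
    rw [MultiplicativeLattice.one_eq_top]; exact sup_top_eq a
  have h := ml_sup_mul a 1 b
  rw [h1, one_mul] at h
  calc a * b ≤ a * b ⊔ b := le_sup_left
  _ = b := h.symm

lemma ml_mul_mono_right (a : L) {x y : L} (h : x ≤ y) : a * x ≤ a * y := by
  have h2 := ml_mul_sup a x y
  rw [sup_eq_right.mpr h] at h2
  exact h2 ▸ le_sup_left

lemma ml_sup_smul (a b : L) (A : M) : (a ⊔ b) • A = a • A ⊔ b • A := by
  have h := LatticeModule.sSup_smul ({a, b} : Set L) A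
  rwa [sSup_pair, iSup_pair] at h

lemma ml_smul_sup (a : L) (A B : M) : a • (A ⊔ B) = a • A ⊔ a • B := by
  have h := LatticeModule.smul_sSup a ({A, B} : Set M)
  rwa [sSup_pair, iSup_pair] at h

lemma ml_smul_mono_left {a b : L} (h : a ≤ b) (A : M) : a • A ≤ b • A := by
  have h2 := ml_sup_smul a b A
  rw [sup_eq_right.mpr h] at h2
  exact h2 ▸ le_sup_left

lemma ml_smul_mono_right (a : L) {A B : M} (h : A ≤ B) : a • A ≤ a • B := by
  have h2 := ml_smul_sup a A B
  rw [sup_eq_right.mpr h] at h2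
  exact h2 ▸ le_sup_left

lemma ml_top_smul (A : M) : (⊤ : L) • A = A := by
  rw [← MultiplicativeLattice.one_eq_top]; exact LatticeModule.one_smul A

lemma ml_mColon_smul (A B : M) : (mColon L A B) • B ≤ A := by
  rw [mColon, LatticeModule.sSup_smul]
  exact iSup₂_le fun x hx => hx

lemma ml_le_mColon {x : L} {A B : M} (h : x • B ≤ A) : x ≤ mColon L A B :=
  le_sSup h

lemma ml_mColon_mono {A A' : M} (h : A ≤ A') (B : M) : mColon L A B ≤ mColon L A' B :=
  sSup_le_sSup fun x hx => le_trans hx h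

lemma ml_colon_top_smul (hmult : IsMultiplicationModule L M) (N : M) :
    (mColon L N ⊤) • (⊤ : M) = N := by
  obtain ⟨c, hc⟩ := hmult N
  refine le_antisymm (ml_mColon_smul N ⊤) ?_
  have hcle : c ≤ mColon L N ⊤ := ml_le_mColon (le_of_eq hc.symm)
  calc N = c • ⊤ := hc
  _ ≤ _ := ml_smul_mono_left hcle ⊤

lemma ml_mColon_self_top (X : M) : mColon L X X = ⊤ :=
  le_antisymm le_top (ml_le_mColon (le_of_eq (ml_top_smul X)))

end Helpers

theorem stmt10 {L : Type u} {M : Type v} [MultiplicativeLattice L] [LatticeModule L M]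
    [IsCompactlyGenerated L]
    (h1cpt : IsCompactElement (1 : L))
    (hmulcpt : ∀ a b : L, IsCompactElement a → IsCompactElement b → IsCompactElement (a * b))
    (hPGL : IsPGLattice L) (hPGM : IsPGModule L M)
    (hmult : IsMultiplicationModule L M) (hfaith : IsFaithfulModule L M)
    {ι : Type*} (a : ι → L) :
    (⨅ α, a α • (⊤ : M)) = (⨅ α, a α : L) • (⊤ : M) := by
  by_cases hι : Nonempty ι
  · set A : L := ⨅ α, a α with hA
    set N : M := ⨅ α, a α • (⊤ : M) with hN
    have hNle : ∀ α, N ≤ a α • ⊤ := fun α => iInf_le _ α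
    have key : ∀ X : M, IsPrincipalElemM L X → X ≤ N → X ≤ A • ⊤ := by
      intro X hXp hXN
      set k : L := mColon L (A • ⊤) X with hk
      have hcoat : IsCoatomic L := CompleteLattice.coatomic_of_top_compact
        (by rw [← MultiplicativeLattice.one_eq_top]; exact h1cpt)
      rcases hcoat.eq_top_or_exists_le_coatom k with hktop | ⟨m, hm, hkm⟩
      · calc X = (⊤ : L) • X := (ml_top_smul X).symm
        _ = k • X := by rw [hktop]
        _ ≤ A • ⊤ := ml_mColon_smul _ _
      · exfalso
        by_cases hWex : ∃ W : M, IsPrincipalElemM L W ∧ ¬ mColon L W ⊤ ≤ m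
        · obtain ⟨W, hWp, hWm⟩ := hWex
          set c : L := mColon L W ⊤ with hc
          have hmc : m ⊔ c = ⊤ := by
            refine hm.2 _ (lt_of_le_of_ne le_sup_left fun h => hWm ?_)
            exact sup_eq_left.mp h.symm
          have hcX : ∀ α, c • X ≤ a α • W := fun α => by
            calc c • X ≤ c • (a α • ⊤) := ml_smul_mono_right c (le_trans hXN (hNle α))
            _ = (c * a α) • ⊤ := (LatticeModule.mul_smul _ _ _).symm
            _ = (a α * c) • ⊤ := by rw [mul_comm]
            _ = a α • (c • ⊤) := LatticeModule.mul_smul _ _ _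
            _ ≤ a α • W := ml_smul_mono_right _ (ml_mColon_smul W ⊤)
          set C : M := ⨅ α, a α • W with hC
          have hCW : C ≤ W := by
            obtain ⟨α0⟩ := hι
            calc C ≤ a α0 • W := iInf_le _ _
            _ ≤ (⊤ : L) • W := ml_smul_mono_left le_top W
            _ = W := ml_top_smul W
          set d : L := mColon L C W with hd
          have hCd : C = d • W := by
            have h1 := hWp.1 ⊤ C
            rw [top_inf_eq, ml_top_smul, inf_eq_right.mpr hCW] at h1
            exact h1.symm
          have hdle : ∀ α, d ≤ a α ⊔ mColon L ⊥ W := fun α => by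
            have h2 := hWp.2 (a α) ⊥
            rw [sup_bot_eq] at h2
            rw [h2]
            exact ml_mColon_mono (iInf_le _ α) W
          have hcann : c * mColon L ⊥ W ≤ ⊥ := by
            have h3 : (c * mColon L ⊥ W) • (⊤ : M) ≤ ⊥ := by
              rw [mul_comm, LatticeModule.mul_smul]
              calc mColon L ⊥ W • (c • ⊤) ≤ mColon L ⊥ W • W :=
                    ml_smul_mono_right _ (ml_mColon_smul W ⊤)
              _ ≤ ⊥ := ml_mColon_smul ⊥ W
            calc c * mColon L ⊥ W ≤ mColon L ⊥ ⊤ := ml_le_mColon h3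
            _ = ⊥ := hfaith
          have hcd : c * d ≤ A := le_iInf fun α => by
            calc c * d ≤ c * (a α ⊔ mColon L ⊥ W) := ml_mul_mono_right c (hdle α)
            _ = c * a α ⊔ c * mColon L ⊥ W := ml_mul_sup _ _ _
            _ ≤ c * a α ⊔ ⊥ := sup_le_sup le_rfl hcann
            _ = c * a α := sup_bot_eq _
            _ ≤ a α := ml_mul_le_right c (a α)
          have hcck : c * c ≤ m := by
            refine le_trans (ml_le_mColon ?_) hkm
            calc (c * c) • X = c • (c • X) := LatticeModule.mul_smul _ _ _
            _ ≤ c • C := ml_smul_mono_right c (le_iInf hcX)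
            _ = (c * d) • W := by rw [hCd, ← LatticeModule.mul_smul]
            _ ≤ A • W := ml_smul_mono_left hcd W
            _ ≤ A • ⊤ := ml_smul_mono_right A le_top
          have htle : (⊤ : L) ≤ m := by
            have htt : (⊤ : L) * ⊤ = ⊤ := by
              rw [← MultiplicativeLattice.one_eq_top]; exact one_mul 1
            calc (⊤ : L) = (m ⊔ c) * (m ⊔ c) := by rw [hmc, htt]
            _ = m * (m ⊔ c) ⊔ c * (m ⊔ c) := ml_sup_mul _ _ _
            _ = (m * m ⊔ m * c) ⊔ (c * m ⊔ c * c) := by rw [ml_mul_sup, ml_mul_sup]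
            _ ≤ m := by
                refine sup_le (sup_le ?_ ?_) (sup_le ?_ ?_)
                · exact ml_mul_le_right m m
                · rw [mul_comm]; exact ml_mul_le_right c m
                · exact ml_mul_le_right c m
                · exact hcck
          exact hm.1 (top_le_iff.mp htle)
        · push_neg at hWex
          have hmtop : m • (⊤ : M) = ⊤ := by
            refine le_antisymm le_top ?_
            conv_lhs => rw [hPGM (⊤ : M)]
            refine sSup_le ?_
            rintro W ⟨hWp, -⟩
            calc W = (mColon L W ⊤) • ⊤ := (ml_colon_top_smul hmult W).symm
            _ ≤ m • ⊤ := ml_smul_mono_left (hWex W hWp) ⊤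
          have hXm : m • X = X := by
            calc m • X = m • ((mColon L X ⊤) • ⊤) := by rw [ml_colon_top_smul hmult X]
            _ = (m * mColon L X ⊤) • ⊤ := (LatticeModule.mul_smul _ _ _).symm
            _ = (mColon L X ⊤ * m) • ⊤ := by rw [mul_comm]
            _ = mColon L X ⊤ • (m • ⊤) := LatticeModule.mul_smul _ _ _
            _ = mColon L X ⊤ • ⊤ := by rw [hmtop]
            _ = X := ml_colon_top_smul hmult X
          have h2 := hXp.2 m ⊥
          rw [sup_bot_eq, hXm, ml_mColon_self_top] at h2
          have hannm : mColon L ⊥ X ≤ m := le_trans (ml_mColon_mono bot_le X) hkm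
          have htle : (⊤ : L) ≤ m := by rw [← h2]; exact sup_le le_rfl hannm
          exact hm.1 (top_le_iff.mp htle)
    refine le_antisymm ?_ (le_iInf fun α => ml_smul_mono_left (iInf_le _ α) ⊤)
    conv_lhs => rw [hPGM N]
    refine sSup_le ?_
    rintro X ⟨hXp, hXN⟩
    exact key X hXp hXN
  · have : IsEmpty ι := not_nonempty_iff.mp hι
    rw [iInf_of_empty, iInf_of_empty, ml_top_smul]
end

section
/- Let L be a PG-lattice and M a faithful multiplication PG-lattice L-module with I_M compact. Then for every proper element N ∈ M, (δ₁(N) : I_M) = √(N:I_M). -/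
open CompleteLattice

universe u v

/-!
In a faithful multiplication module whose top `I_M` is a finite join of principal elements, the
map `b ↦ b I_M` reflects the order, so `(b I_M : I_M) = b` for every `b ∈ L`, in particular for
`b = √(N : I_M)`.

To see that `x I_M ≤ b I_M` forces `x ≤ b`, suppose the residual `(b : x)` lies below a maximal
element `p`. By Nakayama's lemma `I_M ≠ p I_M`, so some principal `E` has `q = (E : I_M) ≰ p`.
Then `q x E ≤ b E`, and join-principality of `E` together with faithfulness gives `q² x ≤ b`,
i.e. `q² ≤ (b : x) ≤ p`, contradicting primality of `p`.
-/

section MultiplicativeLattice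

variable {L : Type u} [MultiplicativeLattice L]

instance : IsQuantale L where
  mul_sSup_distrib x s := by simp only [mul_comm x, MultiplicativeLattice.sSup_mul]
  sSup_mul_distrib := MultiplicativeLattice.sSup_mul

theorem MultiplicativeLattice.le_one (a : L) : a ≤ 1 :=
  MultiplicativeLattice.one_eq_top (L := L) ▸ le_top

theorem Codisjoint.mul_right {a b c : L} (hb : Codisjoint a b) (hc : Codisjoint a c) :
    Codisjoint a (b * c) := by
  rw [codisjoint_iff_le_sup, ← MultiplicativeLattice.one_eq_top]
  calc (1 : L) = (a ⊔ b) * (a ⊔ c) := by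
        rw [codisjoint_iff.1 hb, codisjoint_iff.1 hc, ← MultiplicativeLattice.one_eq_top, one_mul]
    _ = a * (a ⊔ c) ⊔ (b * a ⊔ b * c) := by
        rw [Quantale.sup_mul_distrib, Quantale.mul_sup_distrib (x := b)]
    _ ≤ a ⊔ (a ⊔ b * c) := by
        gcongr
        · exact mul_le_of_le_one_right' (MultiplicativeLattice.le_one _)
        · exact mul_le_of_le_one_left' (MultiplicativeLattice.le_one _)
    _ = a ⊔ b * c := by rw [← sup_assoc, sup_idem]

theorem IsCoatom.le_or_le_of_mul_le {p a b : L} (hp : IsCoatom p) (h : a * b ≤ p) :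
    a ≤ p ∨ b ≤ p := by
  refine or_iff_not_imp_left.2 fun ha => ?_
  have hpa : p ⊔ a = ⊤ :=
    (hp.le_iff.1 le_sup_left).resolve_right fun h => ha (h ▸ le_sup_right)
  calc b = (p ⊔ a) * b := by rw [hpa, ← MultiplicativeLattice.one_eq_top, one_mul]
    _ = p * b ⊔ a * b := Quantale.sup_mul_distrib
    _ ≤ p := sup_le (mul_le_of_le_one_right' (MultiplicativeLattice.le_one _)) h

end MultiplicativeLattice

section LatticeModule

open scoped Quantale

variable {L : Type u} {M : Type v} [MultiplicativeLattice L] [LatticeModule L M]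

instance : MulAction L M where
  one_smul := LatticeModule.one_smul
  mul_smul := LatticeModule.mul_smul

theorem sup_smul (a b : L) (X : M) : (a ⊔ b) • X = a • X ⊔ b • X := by
  rw [← sSup_pair, LatticeModule.sSup_smul, iSup_pair]

theorem smul_sup (a : L) (X Y : M) : a • (X ⊔ Y) = a • X ⊔ a • Y := by
  rw [← sSup_pair, LatticeModule.smul_sSup, iSup_pair]

theorem smul_bot (a : L) : a • (⊥ : M) = ⊥ := by
  simpa using LatticeModule.smul_sSup a (∅ : Set M)

theorem smul_mono_left {a b : L} (h : a ≤ b) (X : M) : a • X ≤ b • X := by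
  rw [← sup_eq_right.2 h, sup_smul]
  exact le_sup_left

instance : CovariantClass L M (· • ·) (· ≤ ·) where
  elim a X Y (h : X ≤ Y) := show a • X ≤ a • Y by
    rw [← sup_eq_right.2 h, smul_sup]
    exact le_sup_left

theorem smul_le_self (a : L) (X : M) : a • X ≤ X := by
  simpa using smul_mono_left (MultiplicativeLattice.le_one a) X

theorem le_mColon_iff {x : L} {A B : M} : x ≤ mColon L A B ↔ x • B ≤ A := by
  refine ⟨fun h => (smul_mono_left h B).trans ?_, fun h => le_sSup h⟩
  rw [mColon, LatticeModule.sSup_smul]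
  exact iSup₂_le fun _ hy => hy

theorem mColon_smul_le (A B : M) : mColon L A B • B ≤ A :=
  le_mColon_iff.1 le_rfl

theorem IsMultiplicationModule.mColon_top_smul_top (hmult : IsMultiplicationModule L M) (E : M) :
    mColon L E ⊤ • (⊤ : M) = E := by
  obtain ⟨a, rfl⟩ := hmult E
  exact le_antisymm (mColon_smul_le _ _) (smul_mono_left (le_mColon_iff.2 le_rfl) _)

theorem IsPrincipalElemM.codisjoint_mColon_sup {a : L} {E B C : M} (hE : IsPrincipalElemM L E)
    (hle : E ⊔ B ≤ a • (E ⊔ B) ⊔ C) (hB : Codisjoint a (mColon L (a • E ⊔ C) B)) :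
    Codisjoint a (mColon L C (E ⊔ B)) := by
  set t := mColon L (a • E ⊔ C) B
  set s := mColon L C E
  have htB : t • B ≤ a • E ⊔ C := mColon_smul_le _ _
  have hatB : a • t • B ≤ (a * a) • E ⊔ C := by
    calc a • t • B ≤ a • (a • E ⊔ C) := smul_mono_right a htB
      _ = (a * a) • E ⊔ a • C := by rw [smul_sup, mul_smul]
      _ ≤ (a * a) • E ⊔ C := sup_le_sup_left (smul_le_self a C) _
  have htE : t • E ≤ (a * t ⊔ a * a) • E ⊔ C := by
    calc t • E ≤ t • (a • (E ⊔ B) ⊔ C) := smul_mono_right t (le_sup_left.trans hle)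
      _ = (a * t) • E ⊔ a • t • B ⊔ t • C := by
        rw [smul_sup, smul_sup, smul_sup, smul_comm t a, smul_comm t a, mul_smul]
      _ ≤ (a * t) • E ⊔ ((a * a) • E ⊔ C) ⊔ C :=
        sup_le_sup (sup_le_sup_left hatB _) (smul_le_self t C)
      _ = (a * t ⊔ a * a) • E ⊔ C := by simp only [sup_smul, sup_assoc, sup_idem]
  -- join-principality of `E` turns `htE` into a bound on `t` itself
  have hts : t ≤ a ⊔ s := by
    have : t ≤ (a * t ⊔ a * a) ⊔ s := by rw [hE.2]; exact le_mColon_iff.2 htE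
    refine this.trans (sup_le_sup_right (sup_le ?_ ?_) s) <;>
      exact mul_le_of_le_one_right' (MultiplicativeLattice.le_one _)
  have hst : s * t ≤ mColon L C (E ⊔ B) := by
    rw [le_mColon_iff, smul_sup]
    have hstE : (s * t) • E ≤ s • E :=
      smul_mono_left (mul_le_of_le_one_right' (MultiplicativeLattice.le_one t)) E
    refine sup_le (hstE.trans (mColon_smul_le C E)) ?_
    calc (s * t) • B ≤ s • (a • E ⊔ C) := by rw [mul_smul]; exact smul_mono_right s htB
      _ = a • s • E ⊔ s • C := by rw [smul_sup, smul_comm]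
      _ ≤ C := sup_le ((smul_mono_right a (mColon_smul_le C E)).trans (smul_le_self a C))
          (smul_le_self s C)
  have hs : Codisjoint a s := by
    rw [codisjoint_iff_le_sup] at hB ⊢
    calc ⊤ ≤ a ⊔ t := hB
      _ ≤ a ⊔ (a ⊔ s) := sup_le_sup_left hts a
      _ = a ⊔ s := by rw [← sup_assoc, sup_idem]
  exact Codisjoint.mono_right hst (hs.mul_right hB)

theorem codisjoint_mColon_finsetSup {F : Finset M} (hF : ∀ E ∈ F, IsPrincipalElemM L E) {a : L}
    {C : M} (hle : F.sup id ≤ a • F.sup id ⊔ C) : Codisjoint a (mColon L C (F.sup id)) := by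
  classical
  induction F using Finset.induction_on generalizing C with
  | empty =>
    refine Codisjoint.mono_right (le_mColon_iff.2 ?_) codisjoint_top_right
    rw [Finset.sup_empty, smul_bot]
    exact bot_le
  | insert E G _ ih =>
    simp only [Finset.sup_insert, id] at hle ⊢
    refine (hF E (Finset.mem_insert_self E G)).codisjoint_mColon_sup hle
      (ih (fun E' hE' => hF E' (Finset.mem_insert_of_mem hE')) ?_)
    calc G.sup id ≤ a • (E ⊔ G.sup id) ⊔ C := le_sup_right.trans hle
      _ = a • G.sup id ⊔ (a • E ⊔ C) := by rw [smul_sup]; ac_rfl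

theorem exists_finset_isPrincipalElemM_sup_eq_top (hPGM : IsPGModule L M)
    (htop : IsCompactElement (⊤ : M)) :
    ∃ F : Finset M, (∀ E ∈ F, IsPrincipalElemM L E) ∧ F.sup id = ⊤ := by
  obtain ⟨F, hFsub, hFtop⟩ :=
    (isCompactElement_iff_exists_le_sSup_of_le_sSup M ⊤).1 htop _ (hPGM ⊤).le
  exact ⟨F, fun E hE => (hFsub hE).1, top_le_iff.1 hFtop⟩

theorem exists_isPrincipalElemM_not_mColon_top_le (hPGM : IsPGModule L M)
    (hmult : IsMultiplicationModule L M) (hfaith : IsFaithfulModule L M)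
    (htop : IsCompactElement (⊤ : M)) {p : L} (hp : IsCoatom p) :
    ∃ E : M, IsPrincipalElemM L E ∧ ¬ mColon L E ⊤ ≤ p := by
  obtain ⟨F, hF, hFtop⟩ := exists_finset_isPrincipalElemM_sup_eq_top hPGM htop
  by_contra! h
  have hle : F.sup id ≤ p • F.sup id ⊔ ⊥ := by
    rw [sup_bot_eq, hFtop]
    conv_lhs => rw [← hFtop]
    refine Finset.sup_le fun E hE => ?_
    rw [id, ← hmult.mColon_top_smul_top E]
    exact smul_mono_left (h E (hF E hE)) _
  have hcodisjoint := codisjoint_mColon_finsetSup hF hle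
  rw [hFtop, hfaith, codisjoint_bot] at hcodisjoint
  exact hp.1 hcodisjoint

theorem IsPrincipalElemM.mColon_top_mul_self_mul_le (hfaith : IsFaithfulModule L M) {E : M}
    (hE : IsPrincipalElemM L E) {x b : L} (hx : x • (⊤ : M) ≤ b • ⊤) :
    mColon L E ⊤ * mColon L E ⊤ * x ≤ b := by
  set q := mColon L E ⊤
  set z := mColon L ⊥ E
  have hqE : q • ⊤ ≤ E := mColon_smul_le E ⊤
  have hqxE : (q * x) • E ≤ b • E := by
    calc (q * x) • E ≤ q • x • ⊤ := by
          rw [mul_smul]; exact smul_mono_right q (smul_mono_right x le_top)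
      _ ≤ q • b • ⊤ := smul_mono_right q hx
      _ = b • q • ⊤ := smul_comm q b ⊤
      _ ≤ b • E := smul_mono_right b hqE
  have hqx : q * x ≤ b ⊔ z := by
    rw [hE.2 b ⊥, sup_bot_eq]
    exact le_mColon_iff.2 hqxE
  have hqz : q * z ≤ ⊥ := by
    rw [← hfaith, le_mColon_iff, mul_comm, mul_smul]
    exact (smul_mono_right z hqE).trans (mColon_smul_le ⊥ E)
  calc q * q * x = q * (q * x) := mul_assoc q q x
    _ ≤ q * b ⊔ q * z := by rw [← Quantale.mul_sup_distrib]; exact mul_le_mul_right hqx q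
    _ ≤ b := sup_le (mul_le_of_le_one_left' (MultiplicativeLattice.le_one q)) (hqz.trans bot_le)

theorem le_of_smul_top_le_smul_top (h1cpt : IsCompactElement (1 : L)) (hPGM : IsPGModule L M)
    (hmult : IsMultiplicationModule L M) (hfaith : IsFaithfulModule L M)
    (htop : IsCompactElement (⊤ : M)) {x b : L} (hx : x • (⊤ : M) ≤ b • ⊤) :
    x ≤ b := by
  suffices h : x ⇨ₗ b = ⊤ by
    simpa using Quantale.leftMulResiduation_le_iff_mul_le.1 (h ▸ le_top : (1 : L) ≤ x ⇨ₗ b)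
  by_contra hne
  have : IsCoatomic L :=
    coatomic_of_top_compact (MultiplicativeLattice.one_eq_top (L := L) ▸ h1cpt)
  obtain ⟨p, hp, hresp⟩ := (eq_top_or_exists_le_coatom (x ⇨ₗ b)).resolve_left hne
  obtain ⟨E, hE, hEp⟩ := exists_isPrincipalElemM_not_mColon_top_le hPGM hmult hfaith htop hp
  have hqq : mColon L E ⊤ * mColon L E ⊤ ≤ x ⇨ₗ b :=
    Quantale.leftMulResiduation_le_iff_mul_le.2 (hE.mColon_top_mul_self_mul_le hfaith hx)
  exact hEp (or_self_iff.1 (hp.le_or_le_of_mul_le (hqq.trans hresp)))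

theorem mColon_smul_top_top (h1cpt : IsCompactElement (1 : L)) (hPGM : IsPGModule L M)
    (hmult : IsMultiplicationModule L M) (hfaith : IsFaithfulModule L M)
    (htop : IsCompactElement (⊤ : M)) (b : L) : mColon L (b • (⊤ : M)) ⊤ = b :=
  le_antisymm
    (sSup_le fun _ hx => le_of_smul_top_le_smul_top h1cpt hPGM hmult hfaith htop hx)
    (le_mColon_iff.2 le_rfl)

end LatticeModule

theorem stmt18_general {L : Type u} {M : Type v} [MultiplicativeLattice L] [LatticeModule L M]
    (h1cpt : IsCompactElement (1 : L))
    (hPGM : IsPGModule L M)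
    (hmult : IsMultiplicationModule L M) (hfaith : IsFaithfulModule L M)
    (htop : IsCompactElement (⊤ : M))
    (N : M) :
    mColon L (delta1 L N) (⊤ : M) = radL (mColon L N (⊤ : M)) :=
  mColon_smul_top_top h1cpt hPGM hmult hfaith htop _

theorem stmt18 {L : Type u} {M : Type v} [MultiplicativeLattice L] [LatticeModule L M]
    [IsCompactlyGenerated L]
    (h1cpt : IsCompactElement (1 : L))
    (hmulcpt : ∀ a b : L, IsCompactElement a → IsCompactElement b → IsCompactElement (a * b))
    (hPGL : IsPGLattice L) (hPGM : IsPGModule L M)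
    (hmult : IsMultiplicationModule L M) (hfaith : IsFaithfulModule L M)
    (htop : IsCompactElement (⊤ : M))
    (N : M) (hN : N < ⊤) :
    mColon L (delta1 L N) (⊤ : M) = radL (mColon L N (⊤ : M)) :=
  stmt18_general h1cpt hPGM hmult hfaith htop N
end
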